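/- Let T be a finite set with positive real weights w, let n ≤ |T|, let V be a list of i < n distinct elements of T, and let τ ∉ T be a new element with positive weight w_τ. Then the total probability mass transferred by the reservoir swap step equals the correct selection probability of the new element: Σ_{t̂ ∈ T \ V} ( P̂(t̂ | V; T, n) − P̂(t̂ | V; T ∪ {τ}, n) ) = P̂(τ | V; T ∪ {τ}, n). -/

import Mathlib

/-- Weighted elementary symmetric sum: `e_m(S; w) = Σ_{T̂ ⊆ S, |T̂| = m} ∏_{j ∈ T̂} w_j`. -/
noncomputable def esymm {ι : Type*} (S : Finset ι) (w : ι → ℝ) (m : ℕ) : ℝ :=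
  ∑ T ∈ S.powersetCard m, ∏ j ∈ T, w j

/-- The sequential selection probability
`P̂(t | V; T, n) = w_t · e_{n-i-1}(T \ (V ∪ {t}); w) / ((n - i) · e_{n-i}(T \ V; w))`
where `i` is the number of already-selected elements recorded in the list `V`. -/
noncomputable def Phat {ι : Type*} [DecidableEq ι] (T : Finset ι) (w : ι → ℝ) (n : ℕ)
    (V : List ι) (t : ι) : ℝ :=
  w t * esymm (T \ insert t V.toFinset) w (n - V.length - 1) /
    (((n - V.length : ℕ) : ℝ) * esymm (T \ V.toFinset) w (n - V.length))

/-! The selection probabilities `P̂(· | V; T, n)` of the candidates `t ∈ T \ V` sum to one: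
with `S = T \ V` and `k = n - |V|`, this is the identity `∑_{t ∈ S} w_t e_{k-1}(S \ {t}) = k e_k(S)`
(each `k`-subset of `S` arises from each of its `k` elements).
Applying it to `T` and to `T ∪ {τ}`, the mass lost by the old candidates is exactly the mass
`P̂(τ | V; T ∪ {τ}, n)` of the new one. -/

open Finset

section esymm

variable {ι : Type*}

lemma esymm_zero (S : Finset ι) (w : ι → ℝ) : esymm S w 0 = 1 := by
  simp [esymm]

lemma esymm_pos {S : Finset ι} {w : ι → ℝ} (hw : ∀ j ∈ S, 0 < w j) {m : ℕ} (hm : m ≤ S.card) : 0 < esymm S w m :=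
  sum_pos (fun _ hA => prod_pos fun j hj => hw j ((mem_powersetCard.mp hA).1 hj))
    (powersetCard_nonempty.mpr hm)

variable [DecidableEq ι]

lemma esymm_insert_succ {S : Finset ι} {a : ι} (ha : a ∉ S) (w : ι → ℝ) (m : ℕ) :
    esymm (insert a S) w (m + 1) = esymm S w (m + 1) + w a * esymm S w m := by
  have haA : ∀ A ∈ S.powersetCard m, a ∉ A := fun _ hA h => ha ((mem_powersetCard.mp hA).1 h)
  have hdisj : Disjoint (S.powersetCard (m + 1)) ((S.powersetCard m).image (insert a)) := by
    refine disjoint_right.mpr fun A hA hA' => ?_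
    obtain ⟨B, -, rfl⟩ := mem_image.mp hA
    exact ha ((mem_powersetCard.mp hA').1 (mem_insert_self a B))
  rw [esymm, powersetCard_succ_insert ha, sum_union hdisj,
    sum_image fun A hA B hB h => by
      rw [← erase_insert (haA A hA), h, erase_insert (haA B hB)],
    esymm, esymm, mul_sum]
  exact congrArg _ (sum_congr rfl fun A hA => prod_insert (haA A hA))

lemma sum_mul_esymm_erase (S : Finset ι) (w : ι → ℝ) (m : ℕ) :
    ∑ t ∈ S, w t * esymm (S.erase t) w m = (m + 1 : ℝ) * esymm S w (m + 1) := by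
  induction S using Finset.induction_on generalizing m with
  | empty => simp [esymm, powersetCard_eq_empty.mpr (show (∅ : Finset ι).card < m + 1 by simp)]
  | @insert a S ha ih =>
    have herase : ∀ t ∈ S, (insert a S).erase t = insert a (S.erase t) := fun t ht =>
      erase_insert_of_ne fun h => ha (h ▸ ht)
    rw [sum_insert ha, erase_insert ha, sum_congr rfl fun t ht => by rw [herase t ht]]
    have haS : ∀ t, a ∉ S.erase t := fun t h => ha (mem_of_mem_erase h)
    cases m with
    | zero =>
      have := ih 0
      simp only [esymm_zero, mul_one] at this ⊢
      rw [this, esymm_insert_succ ha, esymm_zero]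
      push_cast
      ring
    | succ m =>
      simp only [esymm_insert_succ (haS _), mul_add, sum_add_distrib, mul_left_comm _ (w a),
        ← mul_sum, ih, esymm_insert_succ ha]
      push_cast
      ring

end esymm

lemma sum_Phat_eq_one {ι : Type*} [DecidableEq ι] (T : Finset ι) (w : ι → ℝ) (n : ℕ)
    (V : List ι) (hw : ∀ j ∈ T \ V.toFinset, 0 < w j) (hVlen : V.length < n)
    (hcard : n - V.length ≤ (T \ V.toFinset).card) :
    ∑ t ∈ T \ V.toFinset, Phat T w n V t = 1 := by
  obtain ⟨m, hm⟩ : ∃ m, n - V.length = m + 1 := ⟨n - V.length - 1, by omega⟩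
  have hpos : 0 < esymm (T \ V.toFinset) w (m + 1) := esymm_pos hw (hm ▸ hcard)
  simp only [Phat, hm, Nat.add_sub_cancel, sdiff_insert, ← sum_div, sum_mul_esymm_erase]
  push_cast
  exact div_self (by positivity)

theorem sum_swap_mass_eq_general {ι : Type*} [DecidableEq ι] (T : Finset ι) (w : ι → ℝ)
    (hw : ∀ j ∈ T, 0 < w j) (n : ℕ) (hn : n ≤ T.card)
    (V : List ι) (hVT : ∀ x ∈ V, x ∈ T) (hVlen : V.length < n)
    (τ : ι) (hτ : τ ∉ T) (hwτ : 0 < w τ) :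
    ∑ t ∈ T \ V.toFinset, (Phat T w n V t - Phat (insert τ T) w n V t)
      = Phat (insert τ T) w n V τ := by
  have hτV : τ ∉ V.toFinset := fun h => hτ (hVT τ (List.mem_toFinset.mp h))
  have hcard : n - V.length ≤ (T \ V.toFinset).card :=
    (tsub_le_tsub hn V.toFinset_card_le).trans (le_card_sdiff _ _)
  have hold := sum_Phat_eq_one T w n V (fun j hj => hw j (mem_sdiff.mp hj).1) hVlen hcard
  have hnew := sum_Phat_eq_one (insert τ T) w n V
    (fun j hj => (mem_insert.mp (mem_sdiff.mp hj).1).elim (· ▸ hwτ) (hw j)) hVlen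
    (hcard.trans (card_le_card (sdiff_subset_sdiff (subset_insert τ T) le_rfl)))
  rw [insert_sdiff_of_notMem _ hτV, sum_insert fun h => hτ (mem_sdiff.mp h).1] at hnew
  rw [sum_sub_distrib, hold]
  linarith

/-- The total probability mass transferred by the reservoir swap step equals the correct
selection probability of the new element `τ ∉ T`:
`Σ_{t̂ ∈ T \ V} (P̂(t̂ | V; T, n) − P̂(t̂ | V; T ∪ {τ}, n)) = P̂(τ | V; T ∪ {τ}, n)`. -/
theorem sum_swap_mass_eq {ι : Type*} [DecidableEq ι] (T : Finset ι) (w : ι → ℝ)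
    (hw : ∀ j ∈ T, 0 < w j) (n : ℕ) (hn : n ≤ T.card)
    (V : List ι) (hVnd : V.Nodup) (hVT : ∀ x ∈ V, x ∈ T) (hVlen : V.length < n)
    (τ : ι) (hτ : τ ∉ T) (hwτ : 0 < w τ) :
    ∑ t ∈ T \ V.toFinset, (Phat T w n V t - Phat (insert τ T) w n V t)
      = Phat (insert τ T) w n V τ :=
  sum_swap_mass_eq_general T w hw n hn V hVT hVlen τ hτ hwτ
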